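/- arXiv:2604.13698 — 4 statements merged into one kernel-verified Lean document; each statement's English description precedes it below -/
import Mathlib

section
/- Let g : x → y and f : y → x be morphisms in a triangulated category with f ∘ g isomorphic to the identity of x. Then the cone of f is isomorphic to the cone of g shifted by [1]. -/
open CategoryTheory CategoryTheory.Limits CategoryTheory.Pretriangulated

universe v u

namespace PaperGD

variable {C : Type u} [Category.{v} C] [Preadditive C] [HasZeroObject C] [HasShift C ℤ]
  [∀ n : ℤ, (CategoryTheory.shiftFunctor C n).Additive] [Pretriangulated C]

/-- `Hom_T(x,y) = 0`. -/
def HomZero (x y : C) : Prop := ∀ f : x ⟶ y, f = 0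

/-- `pd_H w ≤ n` : vanishing of `Hom(w, h[m])` for all `h ∈ H`, `m > n`. -/
def pdLE (H : Set C) (w : C) (n : ℤ) : Prop :=
  ∀ h ∈ H, ∀ m : ℤ, n < m → HomZero w (h⟦m⟧)

/-- `gd_H T ≤ n`. -/
def gdLE (H : Set C) (n : ℤ) : Prop := ∀ x ∈ H, pdLE H x n

/-- canonical map `⨁ᵢ Hom(M, f i) → Hom(M, ∐ f)`. -/
noncomputable def coprodHom (M : C) {ι : Type v} [DecidableEq ι] (f : ι → C)
    [HasCoproduct f] : DirectSum ι (fun i => (M ⟶ f i)) →+ (M ⟶ ∐ f) :=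
  DirectSum.toAddMonoid fun i =>
    AddMonoidHom.mk' (fun g => g ≫ Sigma.ι f i) (fun _ _ => by simp [Preadditive.add_comp])

/-- compactness: `Hom(M,-)` commutes with coproducts. -/
def IsCompactObj (M : C) : Prop :=
  ∀ (ι : Type v) (f : ι → C) [DecidableEq ι] [HasCoproduct f],
    Function.Bijective (coprodHom M f)

/-- the smallest thick subcategory containing `M`. -/
inductive ThickOf (M : C) : C → Prop
  | base : ThickOf M M
  | zero (x : C) : Limits.IsZero x → ThickOf M x
  | shift (x : C) (n : ℤ) : ThickOf M x → ThickOf M (x⟦n⟧)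
  | ext (T : Triangle C) : (T ∈ distTriang C) → ThickOf M T.obj₁ → ThickOf M T.obj₂ →
      ThickOf M T.obj₃
  | retract (x y : C) (i : y ⟶ x) (p : x ⟶ y) : i ≫ p = 𝟙 y → ThickOf M x → ThickOf M y

/-- `M` is a compact silting object: compact, no positive self-extensions, and it
generates the compacts as a thick subcategory. -/
structure IsCompactSilting (M : C) : Prop where
  compact : IsCompactObj M
  orth : ∀ n : ℤ, 0 < n → HomZero M (M⟦n⟧)
  thick_eq : ∀ x : C, ThickOf M x ↔ IsCompactObj x

/-- the heart `M^{⊥_{≠0}}` of the silting t-structure. -/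
def siltHeart (M : C) : Set C := {y | ∀ n : ℤ, n ≠ 0 → HomZero M (y⟦n⟧)}

/-- the aisle `M^{⊥_{>0}}`. -/
def siltAisle (M : C) : Set C := {y | ∀ n : ℤ, 0 < n → HomZero M (y⟦n⟧)}

/-- the coaisle `M^{⊥_{≤0}}`. -/
def siltCoaisle (M : C) : Set C := {y | ∀ n : ℤ, n ≤ 0 → HomZero M (y⟦n⟧)}

/-- `T` is compactly generated. -/
def CompactlyGenerated (C : Type u) [Category.{v} C] [Preadditive C] [HasZeroObject C]
    [HasShift C ℤ] [∀ n : ℤ, (CategoryTheory.shiftFunctor C n).Additive] [Pretriangulated C] :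
    Prop :=
  ∀ y : C, (∀ x : C, IsCompactObj x → ∀ n : ℤ, HomZero x (y⟦n⟧)) → Limits.IsZero y

/-- bounded objects `T^b = (T^c)^⋇`. -/
def Bounded (t : C) : Prop :=
  ∀ x : C, IsCompactObj x → ∃ N : ℕ, ∀ n : ℤ, (N : ℤ) ≤ |n| → HomZero x (t⟦n⟧)

/-- `x ∈ Add s` : summand of a coproduct of copies of `s`. -/
def InAdd (s x : C) : Prop :=
  ∃ (ι : Type v) (_ : HasCoproduct (fun _ : ι => s)) (i : x ⟶ ∐ (fun _ : ι => s))
    (p : (∐ (fun _ : ι => s)) ⟶ x), i ≫ p = 𝟙 x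

/-- `x ∈ add s` : summand of a finite coproduct of copies of `s`. -/
def InAddFin (s x : C) : Prop :=
  ∃ (n : ℕ) (_ : HasCoproduct (fun _ : Fin n => s)) (i : x ⟶ ∐ (fun _ : Fin n => s))
    (p : (∐ (fun _ : Fin n => s)) ⟶ x), i ≫ p = 𝟙 x

/-- finite filtrations (in the heart `H`) with quotients satisfying `P`,
encoded by triangles `s₁ → x → x₁ → s₁[1]`. -/
inductive FiltBy (H : Set C) (P : C → Prop) : ℕ → C → Prop
  | zero (x : C) : P x → FiltBy H P 0 x
  | succ (n : ℕ) (T : Triangle C) : (T ∈ distTriang C) → P T.obj₁ → T.obj₃ ∈ H →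
      FiltBy H P n T.obj₃ → FiltBy H P (n + 1) T.obj₂

/-- the class `Add M ∗ Add M[1] ∗ ⋯ ∗ Add M[d]`. -/
inductive AddStar (M : C) : ℕ → C → Prop
  | zero (x : C) : InAdd M x → AddStar M 0 x
  | succ (d : ℕ) (T : Triangle C) (w : C) : (T ∈ distTriang C) → InAdd M T.obj₁ →
      AddStar M d w → Nonempty (T.obj₃ ≅ w⟦(1 : ℤ)⟧) → AddStar M (d + 1) T.obj₂

/-- `Hom_T(x,-)` restricted to `H` commutes with coproducts. -/
def HomPreservesCoprodsOn (H : Set C) (x : C) : Prop :=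
  ∀ (ι : Type v) (h : ι → C) [DecidableEq ι] [HasCoproduct h],
    (∀ i, h i ∈ H) → Function.Bijective (coprodHom x h)

/-- a t-structure `(U,V)` (as a torsion pair with `U[1] ⊆ U`). -/
structure TStruct (C : Type u) [Category.{v} C] [Preadditive C] [HasZeroObject C]
    [HasShift C ℤ] [∀ n : ℤ, (CategoryTheory.shiftFunctor C n).Additive] [Pretriangulated C] where
  U : Set C
  V : Set C
  U_eq : U = {x | ∀ v ∈ V, HomZero x v}
  V_eq : V = {y | ∀ u ∈ U, HomZero u y}
  decomp : ∀ x : C, ∃ (u v : C) (f : u ⟶ x) (g : x ⟶ v) (h : v ⟶ u⟦(1 : ℤ)⟧),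
      (Triangle.mk f g h ∈ distTriang C) ∧ u ∈ U ∧ v ∈ V
  shift_le : ∀ u ∈ U, u⟦(1 : ℤ)⟧ ∈ U

/-- the heart `H = U ∩ V[1]` of a t-structure. -/
def TStruct.heart (t : TStruct C) : Set C := {x | x ∈ t.U ∧ x⟦(-1 : ℤ)⟧ ∈ t.V}

/- Since `g` has the retraction `f`, its triangle splits: `(f, g₂) : y ≅ x ⊞ cg`. Through this
isomorphism `f` becomes the projection `cg ⊞ x ⟶ x`, whose cone is `cg⟦1⟧` by rotating the split
triangle, and cones are unique up to isomorphism. -/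

theorem isIso_biprod_lift_of_retraction (T : Triangle C) (hT : T ∈ distTriang C)
    (r : T.obj₂ ⟶ T.obj₁) (hr : T.mor₁ ≫ r = 𝟙 _) : IsIso (biprod.lift r T.mor₂) := by
  have hT₃ : T.mor₃ = 0 := T.mor₃_eq_zero_of_mono₁ hT (mono_of_mono_fac hr)
  let φ : T ⟶ binaryBiproductTriangle T.obj₁ T.obj₃ :=
    { hom₁ := 𝟙 _
      hom₂ := biprod.lift r T.mor₂
      hom₃ := 𝟙 _
      comm₁ := by
        change T.mor₁ ≫ biprod.lift r T.mor₂ = 𝟙 _ ≫ biprod.inl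
        ext <;> simp [hr, comp_distTriang_mor_zero₁₂ _ hT]
      comm₂ := by change T.mor₂ ≫ 𝟙 _ = biprod.lift r T.mor₂ ≫ biprod.snd; simp
      comm₃ := by change T.mor₃ ≫ _ = 𝟙 _ ≫ 0; simp [hT₃] }
  exact isIso₂_of_isIso₁₃ φ hT (binaryBiproductTriangle_distinguished _ _)
    (IsIso.id _) (IsIso.id _)

/-- if `g : x ⟶ y` is a section of `f : y ⟶ x`, then
`cone(f) ≅ cone(g)[1]`. -/
theorem cone_iso_of_section (x y cg cf : C) (g : x ⟶ y) (f : y ⟶ x)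
    (hgf : g ≫ f = 𝟙 x)
    (g₂ : y ⟶ cg) (g₃ : cg ⟶ x⟦(1 : ℤ)⟧) (hTg : Triangle.mk g g₂ g₃ ∈ distTriang C)
    (f₂ : x ⟶ cf) (f₃ : cf ⟶ y⟦(1 : ℤ)⟧) (hTf : Triangle.mk f f₂ f₃ ∈ distTriang C) :
    Nonempty (cf ≅ cg⟦(1 : ℤ)⟧) := by
  have : IsIso (biprod.lift f g₂) := isIso_biprod_lift_of_retraction _ hTg f hgf
  let e : Arrow.mk f ≅ Arrow.mk (biprod.snd : cg ⊞ x ⟶ x) :=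
    Arrow.isoMk (asIso (biprod.lift f g₂) ≪≫ biprod.braiding x cg) (Iso.refl x) (by simp)
  obtain ⟨e', -⟩ := exists_iso_of_arrow_iso _ _ hTf
    (rot_of_distTriang _ (binaryBiproductTriangle_distinguished cg x)) e
  exact ⟨Triangle.π₃.mapIso e'⟩

end PaperGD
end

section
/- Let T be a triangulated category with a t-structure whose heart is H, and suppose s ∈ H is such that every object of H admits a finite filtration in H whose successive quotients lie in Add(s) (summands of coproducts of copies of s). Then the global dimension of T relative to H equals pd_H(s). -/
open CategoryTheory CategoryTheory.Limits CategoryTheory.Pretriangulated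

universe v u

namespace PaperGD

variable {C : Type u} [Category.{v} C] [Preadditive C] [HasZeroObject C] [HasShift C ℤ]
  [∀ n : ℤ, (CategoryTheory.shiftFunctor C n).Additive] [Pretriangulated C]

lemma pdLE_of_inadd {H : Set C} {s x : C} (hsn : ∀ h ∈ H, ∀ m : ℤ, (n0 : ℤ) < m → HomZero s (h⟦m⟧))
    (hx : InAdd s x) : pdLE H x n0 := by
  obtain ⟨ι, _, i, p, hip⟩ := hx
  intro h hh m hm f
  have hpf : p ≫ f = 0 := by
    apply Limits.Sigma.hom_ext
    intro j
    rw [← Category.assoc, comp_zero]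
    exact hsn h hh m hm _
  calc f = (i ≫ p) ≫ f := by rw [hip, Category.id_comp]
    _ = 0 := by rw [Category.assoc, hpf, comp_zero]

lemma pdLE_of_filt {H : Set C} {s : C} {n0 : ℤ} (hsn : pdLE H s n0) :
    ∀ (k : ℕ) (x : C), FiltBy H (InAdd s) k x → pdLE H x n0 := by
  intro k x hx
  induction hx with
  | zero x hx => exact pdLE_of_inadd hsn hx
  | succ n T hT h1 h3 _ ih =>
    intro h hh m hm f
    have h1' : T.mor₁ ≫ f = 0 := pdLE_of_inadd hsn h1 h hh m hm _
    obtain ⟨g, hg⟩ := Triangle.yoneda_exact₂ T hT f h1'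
    rw [hg, ih h hh m hm g, comp_zero]

/-- if every object of the heart is filtered with quotients in `Add s`,
then the global dimension of `T` relative to `H` equals `pd_H s`
(stated as equality of the sets of upper bounds). -/
theorem gd_eq_pd_of_filtration (t : TStruct C) (s : C) (hs : s ∈ t.heart)
    (filt : ∀ x ∈ t.heart, ∃ n : ℕ, FiltBy t.heart (InAdd s) n x) :
    ∀ n : ℤ, gdLE t.heart n ↔ pdLE t.heart s n := by
  intro n
  constructor
  · intro hgd
    exact hgd s hs
  · intro hpd x hx
    obtain ⟨k, hk⟩ := filt x hx
    exact pdLE_of_filt hpd k x hk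

end PaperGD
end

section
/- Let T be a triangulated category with a t-structure with heart H, closed under coproducts in the relevant sense. If for every x ∈ H and y ∈ H one has Hom_T(x, y[n]) = 0 for n ≫ 0 (where the bound may depend on x and y), and if H is closed under coproducts with Hom-vanishing compatible with coproducts as in the heart of a compactly generated t-structure, then there exists a uniform integer d such that Hom_T(x, y[m]) = 0 for all x, y ∈ H and all m > d. -/
open CategoryTheory CategoryTheory.Limits CategoryTheory.Pretriangulated

universe v u

namespace PaperGD

variable {C : Type u} [Category.{v} C] [Preadditive C] [HasZeroObject C] [HasShift C ℤ]
  [∀ n : ℤ, (CategoryTheory.shiftFunctor C n).Additive] [Pretriangulated C]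

/-- if the heart is closed under coproducts (computed in `T`) and
`Hom(x, y[n]) = 0` for `n ≫ 0` for each pair `x, y` in the heart, then the bound
is uniform. -/
theorem uniform_bound_of_pointwise [HasCoproducts.{v} C] (hgen : CompactlyGenerated C)
    (t : TStruct C)
    (hclosed : ∀ (ι : Type v) (f : ι → C) [HasCoproduct f],
      (∀ i, f i ∈ t.heart) → (∐ f) ∈ t.heart)
    (hpt : ∀ x ∈ t.heart, ∀ y ∈ t.heart,
      ∃ N : ℕ, ∀ n : ℤ, (N : ℤ) ≤ |n| → HomZero x (y⟦n⟧)) :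
    ∃ d : ℤ, ∀ x ∈ t.heart, ∀ y ∈ t.heart, ∀ m : ℤ, d < m → HomZero x (y⟦m⟧) := by
  by_contra hcon
  push_neg at hcon
  have hch : ∀ n : ℕ, ∃ (x y : C) (m : ℤ) (f : x ⟶ y⟦m⟧),
      x ∈ t.heart ∧ y ∈ t.heart ∧ (n : ℤ) < m ∧ f ≠ 0 := by
    intro n
    obtain ⟨x, hx, y, hy, m, hm, hf⟩ := hcon (n : ℤ)
    simp only [HomZero, not_forall] at hf
    obtain ⟨f, hf⟩ := hf
    exact ⟨x, y, m, f, hx, hy, hm, hf⟩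
  choose x y m f hx hy hm hf using hch
  set X : C := ∐ (fun k : ULift.{v} ℕ => x k.down) with hX
  set Y : C := ∐ (fun k : ULift.{v} ℕ => y k.down) with hY
  have hXh : X ∈ t.heart := hclosed _ _ (fun k => hx k.down)
  have hYh : Y ∈ t.heart := hclosed _ _ (fun k => hy k.down)
  obtain ⟨N, hN⟩ := hpt X hXh Y hYh
  have hmpos : (0 : ℤ) < m N := lt_of_le_of_lt (Int.natCast_nonneg N) (hm N)
  have hmn : (N : ℤ) ≤ |m N| := by
    rw [abs_of_pos hmpos]; exact le_of_lt (hm N)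
  have hz := hN (m N) hmn
  let g : X ⟶ (Y⟦m N⟧) := Sigma.desc (fun k =>
    if h : k = ULift.up N then
      eqToHom (by rw [h]) ≫ f N ≫
        (shiftFunctor C (m N)).map
          (Sigma.ι (fun k : ULift.{v} ℕ => y k.down) (ULift.up N))
    else 0)
  have hg0 : g = 0 := hz g
  have hι : Sigma.ι (fun k : ULift.{v} ℕ => x k.down) (ULift.up N) ≫ g
      = f N ≫ (shiftFunctor C (m N)).map
          (Sigma.ι (fun k : ULift.{v} ℕ => y k.down) (ULift.up N)) := by
    simp [g]
  let p : Y ⟶ y N := Sigma.desc (fun k =>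
    if h : k = ULift.up N then eqToHom (by rw [h]) else 0)
  have hιp : Sigma.ι (fun k : ULift.{v} ℕ => y k.down) (ULift.up N) ≫ p
      = 𝟙 (y N) := by simp [p]
  apply hf N
  have hzero : f N ≫ (shiftFunctor C (m N)).map
        (Sigma.ι (fun k : ULift.{v} ℕ => y k.down) (ULift.up N))
      ≫ (shiftFunctor C (m N)).map p = 0 := by
    rw [← Category.assoc, ← hι, hg0]; simp
  calc f N = f N ≫ (shiftFunctor C (m N)).map
        (Sigma.ι (fun k : ULift.{v} ℕ => y k.down) (ULift.up N) ≫ p) := by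
        rw [hιp, CategoryTheory.Functor.map_id, Category.comp_id]
    _ = 0 := by rw [Functor.map_comp]; exact hzero

end PaperGD
end

section
/- Let h : A → B be a morphism of dg algebras with restriction functor h_* : D(B) → D(A) and induction h^* = − ⊗^L_A B. Let T_h denote the cone of h in the derived category of A-bimodules. For a B-module x, set x_0 = x and define inductively x_k to be the cone of the counit h^* h_*(x_{k−1}) → x_{k−1} in D(B). Then h_*(x_n) ≅ h_*(x) ⊗^L_A T_h^{⊗n}[n] in D(A), where T_h^{⊗n} is the n-fold derived tensor product of T_h over A. -/
/-!
Applying `h_*` to the counit triangle `h^* h_* x_k → x_k → x_{k+1}` gives a triangle whose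
first map is split by the unit of `h_* x_k` (a triangle identity of the adjunction). The cone
of a split epimorphism `r` with section `u` is the shifted cone of `u`, and the cone of the unit
at `z` is `z ⊗^L_A T_h`; hence `h_* x_{k+1} ≅ (h_* x_k ⊗^L_A T_h)[1]`, and induction on `k`
concludes.
-/

open CategoryTheory CategoryTheory.Limits CategoryTheory.Pretriangulated

universe v u

namespace PaperGD

variable {C : Type u} [Category.{v} C] [Preadditive C] [HasZeroObject C] [HasShift C ℤ]
  [∀ n : ℤ, (CategoryTheory.shiftFunctor C n).Additive] [Pretriangulated C]

/-- An abstract model of the derived category `D(A)` of a connective dg algebra `A`: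
a compactly generated triangulated category together with its canonical compact silting
generator `A` (connectivity of the dg algebra corresponds exactly to `A` being silting).
The aisle `siltAisle A` is `D^{≤0}(A)`, the heart `siltHeart A` is `Mod H^0(A)`,
and `Bounded` is `D^b(A)`. -/
structure DGSetup (C : Type u) [Category.{v} C] [Preadditive C] [HasZeroObject C]
    [HasShift C ℤ] [∀ n : ℤ, (CategoryTheory.shiftFunctor C n).Additive] [Pretriangulated C] where
  A : C
  silting : IsCompactSilting A
  gen : ∀ y : C, (∀ n : ℤ, HomZero A (y⟦n⟧)) → Limits.IsZero y

/-- `n`-fold composite of an endofunctor (modelling the `n`-fold derived tensor power of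
a bimodule via its associated tensor endofunctor). -/
def funPow {D : Type u} [Category.{v} D] (T : D ⥤ D) : ℕ → (D ⥤ D)
  | 0 => 𝟭 D
  | (n + 1) => funPow T n ⋙ T

variable {CB : Type u} [Category.{v} CB] [Preadditive CB] [HasZeroObject CB] [HasShift CB ℤ]
  [∀ n : ℤ, (CategoryTheory.shiftFunctor CB n).Additive] [Pretriangulated CB]

section SplitTriangle

variable {X Y Z : C} {u : X ⟶ Y} {e : Y ⟶ Z} {d : Z ⟶ X⟦(1 : ℤ)⟧} {r : Y ⟶ X}

lemma exists_section_of_distTriang_of_retraction (hT : Triangle.mk u e d ∈ distTriang C)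
    (hr : u ≫ r = 𝟙 X) :
    ∃ s : Z ⟶ Y, s ≫ e = 𝟙 Z ∧ s ≫ r = 0 ∧ e ≫ s + r ≫ u = 𝟙 Y := by
  have hue : u ≫ e = 0 := comp_distTriang_mor_zero₁₂ _ hT
  have hu : Mono u := (IsSplitMono.mk' ⟨r, hr⟩).mono
  have hd : 𝟙 Z ≫ d = 0 := by
    rw [show d = 0 from Triangle.mor₃_eq_zero_of_mono₁ _ hT hu, comp_zero]
  obtain ⟨s₀, hs₀⟩ : ∃ s₀ : Z ⟶ Y, 𝟙 Z = s₀ ≫ e := Triangle.coyoneda_exact₃ _ hT (𝟙 Z) hd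
  set s := s₀ - s₀ ≫ r ≫ u
  have hse : s ≫ e = 𝟙 Z := by simp [s, hue, hs₀]
  have hsr : s ≫ r = 0 := by simp [s, hr]
  refine ⟨s, hse, hsr, ?_⟩
  -- The defect `θ` factors through `u` since `θ ≫ e = 0`, and is killed by the retraction `r`.
  set θ := 𝟙 Y - (e ≫ s + r ≫ u)
  have hθe : θ ≫ e = 0 := by simp [θ, hse, hue]
  have hθr : θ ≫ r = 0 := by simp [θ, hsr, hr]
  obtain ⟨c, hc⟩ : ∃ c : Y ⟶ X, θ = c ≫ u := Triangle.coyoneda_exact₂ _ hT θ hθe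
  have hc0 : c = 0 := by simpa [hc, hr] using hθr
  exact (sub_eq_zero.mp (hc.trans (by simp [hc0]))).symm

lemma distTriang_snd_of_isBilimit {b : BinaryBicone Z X} (hb : b.IsBilimit) :
    Triangle.mk b.snd (0 : X ⟶ Z⟦(1 : ℤ)⟧) (-b.inl⟦(1 : ℤ)⟧') ∈ distTriang C := by
  have hinl : b.inl ≫ biprod.lift b.fst b.snd = biprod.inl := by ext <;> simp
  refine isomorphic_distinguished _
    (rot_of_distTriang _ (binaryBiproductTriangle_distinguished Z X)) _ ?_
  refine Triangle.isoMk _ _ (biprod.uniqueUpToIso Z X hb) (Iso.refl X) (Iso.refl _) ?_ ?_ ?_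
  · exact (Category.comp_id _).trans (biprod.lift_snd _ _).symm
  · exact (Category.comp_id _).trans (Category.id_comp _).symm
  · show (-b.inl⟦(1 : ℤ)⟧') ≫ (biprod.lift b.fst b.snd)⟦(1 : ℤ)⟧' =
      𝟙 _ ≫ (-biprod.inl⟦(1 : ℤ)⟧')
    rw [Preadditive.neg_comp, ← Functor.map_comp, hinl, Category.id_comp]

lemma nonempty_iso_shift_of_distTriang_of_retraction {R : C}
    (hT : Triangle.mk u e d ∈ distTriang C) (hr : u ≫ r = 𝟙 X)
    {g : X ⟶ R} {w : R ⟶ Y⟦(1 : ℤ)⟧} (hT' : Triangle.mk r g w ∈ distTriang C) :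
    Nonempty (R ≅ Z⟦(1 : ℤ)⟧) := by
  obtain ⟨s, hse, hsr, htotal⟩ := exists_section_of_distTriang_of_retraction hT hr
  let b : BinaryBicone Z X :=
    { pt := Y, fst := e, snd := r, inl := s, inr := u
      inl_fst := hse, inl_snd := hsr
      inr_fst := comp_distTriang_mor_zero₁₂ _ hT, inr_snd := hr }
  exact ⟨Triangle.π₃.mapIso (isoTriangleOfIso₁₂ _ _ hT'
    (distTriang_snd_of_isBilimit (isBinaryBilimitOfTotal b htotal)) (Iso.refl Y) (Iso.refl X)
    ((Category.comp_id r).trans (Category.id_comp r).symm))⟩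

end SplitTriangle

lemma nonempty_iso_res_obj_of_counit_distTriang {res : CB ⥤ C} [res.CommShift ℤ]
    [res.IsTriangulated] {ind : C ⥤ CB} (adj : ind ⊣ res) {y y' : CB} {Z : C}
    {e : res.obj (ind.obj (res.obj y)) ⟶ Z} {d : Z ⟶ (res.obj y)⟦(1 : ℤ)⟧}
    (hunit : Triangle.mk (adj.unit.app (res.obj y)) e d ∈ distTriang C)
    {g : y ⟶ y'} {w : y' ⟶ (ind.obj (res.obj y))⟦(1 : ℤ)⟧}
    (hcone : Triangle.mk (adj.counit.app y) g w ∈ distTriang CB) :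
    Nonempty (res.obj y' ≅ Z⟦(1 : ℤ)⟧) :=
  nonempty_iso_shift_of_distTriang_of_retraction hunit (adj.right_triangle_components y)
    (res.map_distinguished _ hcone)

/-- Here `T_h` is modelled by its tensor endofunctor `T = - ⊗^L_A T_h`, together with the
natural triangles `z → z ⊗^L_A B → z ⊗^L_A T_h → z[1]` whose first map is the unit of
`ind ⊣ res`. -/
theorem res_of_iterated_counit_cone_general
    (res : CB ⥤ C) [res.CommShift ℤ] [res.IsTriangulated]
    (ind : C ⥤ CB)
    (adj : ind ⊣ res)
    (T : C ⥤ C) [T.CommShift ℤ]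
    (ε : ind ⋙ res ⟶ T) (δ : T ⟶ CategoryTheory.shiftFunctor C (1 : ℤ))
    (hT : ∀ z : C, Triangle.mk (adj.unit.app z) (ε.app z) (δ.app z) ∈ distTriang C)
    (x : CB) (xs : ℕ → CB) (h0 : xs 0 = x)
    (g : ∀ k : ℕ, xs k ⟶ xs (k + 1))
    (w : ∀ k : ℕ, xs (k + 1) ⟶ (ind.obj (res.obj (xs k)))⟦(1 : ℤ)⟧)
    (hcone : ∀ k : ℕ, Triangle.mk (adj.counit.app (xs k)) (g k) (w k) ∈ distTriang CB) :
    ∀ n : ℕ, Nonempty (res.obj (xs n) ≅ ((funPow T n).obj (res.obj x))⟦(n : ℤ)⟧) := by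
  subst h0
  intro n
  induction n with
  | zero => exact ⟨((shiftFunctorZero C ℤ).app _).symm⟩
  | succ k ih =>
    obtain ⟨ek⟩ := ih
    obtain ⟨ck⟩ := nonempty_iso_res_obj_of_counit_distTriang adj (hT _) (hcone k)
    let W := (funPow T k).obj (res.obj (xs 0))
    have shift_succ :
        (T.obj (W⟦(k : ℤ)⟧))⟦(1 : ℤ)⟧ ≅ (T.obj W)⟦((k + 1 : ℕ) : ℤ)⟧ :=
      (shiftFunctor C (1 : ℤ)).mapIso ((T.commShiftIso (k : ℤ)).app W) ≪≫
        ((shiftFunctorAdd' C (k : ℤ) 1 ((k + 1 : ℕ) : ℤ) (by push_cast; ring)).app _).symm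
    exact ⟨ck ≪≫ (shiftFunctor C (1 : ℤ)).mapIso (T.mapIso ek) ≪≫ shift_succ⟩

/-- for a morphism `h : A → B` of dg algebras with
induction–restriction adjunction `(h^* = ind) ⊣ (h_* = res)`, where the bimodule
`T_h = cone(h)` is modelled by its tensor endofunctor `T` together with the natural
triangles `z → z ⊗^L_A B → z ⊗^L_A T_h → z[1]` (the first map being the unit),
if `x_k` is the iterated cone of the counit `h^* h_* x_{k-1} → x_{k-1}` starting at
`x_0 = x`, then `h_*(x_n) ≅ h_*(x) ⊗^L_A T_h^{⊗n} [n]`. -/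
theorem res_of_iterated_counit_cone
    (SA : DGSetup C) (SB : DGSetup CB)
    (res : CB ⥤ C) [res.CommShift ℤ] [res.IsTriangulated]
    (ind : C ⥤ CB) [ind.CommShift ℤ] [ind.IsTriangulated]
    (adj : ind ⊣ res) (hind : Nonempty (ind.obj SA.A ≅ SB.A))
    (T : C ⥤ C) [T.CommShift ℤ] [T.IsTriangulated]
    (ε : ind ⋙ res ⟶ T) (δ : T ⟶ CategoryTheory.shiftFunctor C (1 : ℤ))
    (hT : ∀ z : C, Triangle.mk (adj.unit.app z) (ε.app z) (δ.app z) ∈ distTriang C)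
    (x : CB) (xs : ℕ → CB) (h0 : xs 0 = x)
    (g : ∀ k : ℕ, xs k ⟶ xs (k + 1))
    (w : ∀ k : ℕ, xs (k + 1) ⟶ (ind.obj (res.obj (xs k)))⟦(1 : ℤ)⟧)
    (hcone : ∀ k : ℕ, Triangle.mk (adj.counit.app (xs k)) (g k) (w k) ∈ distTriang CB) :
    ∀ n : ℕ, Nonempty (res.obj (xs n) ≅ ((funPow T n).obj (res.obj x))⟦(n : ℤ)⟧) :=
  res_of_iterated_counit_cone_general res ind adj T ε δ hT x xs h0 g w hcone

end PaperGD
end
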